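/- arXiv:math/0701626 — 2 statements merged into one kernel-verified Lean document; each statement's English description precedes it below -/
import Mathlib

section
/- For each real number y in ℝⁿ, the polynomial R₆(x) = (x,y)⁶ − (15/(8+n))·(x,y)⁴‖x‖²‖y‖² + (45/(48+14n+n²))·(x,y)²‖x‖⁴‖y‖⁴ − (15/(192+104n+18n²+n³))·‖x‖⁶‖y‖⁶ is harmonic in x, i.e. its Euclidean Laplacian vanishes. -/
open MvPolynomial

/-- The scalar product polynomial `(x,y) = Σᵢ yᵢ xᵢ` as a polynomial in `x`. -/
noncomputable def ipPoly {n : ℕ} (y : Fin n → ℝ) : MvPolynomial (Fin n) ℝ :=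
  ∑ i, C (y i) * X i

/-- The squared norm polynomial `‖x‖² = Σᵢ xᵢ²`. -/
noncomputable def normSqPoly (n : ℕ) : MvPolynomial (Fin n) ℝ := ∑ i, X i ^ 2

/-- The Euclidean Laplacian `Δ = Σᵢ ∂²/∂xᵢ²` on polynomials. -/
noncomputable def laplacian {n : ℕ} (P : MvPolynomial (Fin n) ℝ) :
    MvPolynomial (Fin n) ℝ :=
  ∑ i, pderiv i (pderiv i P)

lemma pderiv_ipPoly {n : ℕ} (y : Fin n → ℝ) (i : Fin n) :
    pderiv i (ipPoly y) = C (y i) := by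
  simp [ipPoly, pderiv_mul, pderiv_C, Pi.single_apply, mul_ite, Finset.sum_ite_eq']

lemma pderiv_normSqPoly {n : ℕ} (i : Fin n) :
    pderiv i (normSqPoly n) = C 2 * X i := by
  simp [normSqPoly, pderiv_pow, Pi.single_apply, mul_ite, Finset.sum_ite_eq', map_ofNat]

lemma pderiv_ofNat {n : ℕ} (i : Fin n) (k : ℕ) [k.AtLeastTwo] :
    pderiv i (OfNat.ofNat k : MvPolynomial (Fin n) ℝ) = 0 := by
  rw [← map_ofNat (C : ℝ →+* MvPolynomial (Fin n) ℝ) k, pderiv_C]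

lemma pderiv_natCast {n : ℕ} (i : Fin n) (k : ℕ) :
    pderiv i ((k : MvPolynomial (Fin n) ℝ)) = 0 := by
  rw [← map_natCast (C : ℝ →+* MvPolynomial (Fin n) ℝ) k, pderiv_C]

/-- For each `y ∈ ℝⁿ`, the polynomial
`R₆(x) = (x,y)⁶ − (15/(8+n))(x,y)⁴‖x‖²‖y‖² + (45/(48+14n+n²))(x,y)²‖x‖⁴‖y‖⁴
− (15/(192+104n+18n²+n³))‖x‖⁶‖y‖⁶` is harmonic. -/
theorem stmt_4 (n : ℕ) (hn : 1 ≤ n) (y : Fin n → ℝ) :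
    laplacian
      ((ipPoly y) ^ 6
        - C (15 / (8 + (n : ℝ))) * (ipPoly y) ^ 4 * normSqPoly n * C (∑ i, (y i) ^ 2)
        + C (45 / (48 + 14 * (n : ℝ) + (n : ℝ) ^ 2)) * (ipPoly y) ^ 2
            * (normSqPoly n) ^ 2 * C ((∑ i, (y i) ^ 2) ^ 2)
        - C (15 / (192 + 104 * (n : ℝ) + 18 * (n : ℝ) ^ 2 + (n : ℝ) ^ 3))
            * (normSqPoly n) ^ 3 * C ((∑ i, (y i) ^ 2) ^ 3)) = 0 := by
  set c : ℝ := ∑ i, (y i) ^ 2 with hc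
  set a' : ℝ := 15 / (8 + (n : ℝ)) with ha
  set b' : ℝ := 45 / (48 + 14 * (n : ℝ) + (n : ℝ) ^ 2) with hb
  set d' : ℝ := 15 / (192 + 104 * (n : ℝ) + 18 * (n : ℝ) ^ 2 + (n : ℝ) ^ 3) with hd
  set u : MvPolynomial (Fin n) ℝ := ipPoly y with hu0
  set v : MvPolynomial (Fin n) ℝ := normSqPoly n with hv0
  have hu : ∀ i : Fin n, pderiv i u = C (y i) := pderiv_ipPoly y
  have hv : ∀ i : Fin n, pderiv i v = C 2 * X i := fun i => pderiv_normSqPoly i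
  set A : MvPolynomial (Fin n) ℝ :=
    30 * u ^ 4 - C a' * C c * (12 * u ^ 2 * v) + C b' * C (c ^ 2) * (2 * v ^ 2) with hA
  set B : MvPolynomial (Fin n) ℝ :=
    -(C a' * C c) * (16 * u ^ 3) + C b' * C (c ^ 2) * (16 * u * v) with hB
  set D : MvPolynomial (Fin n) ℝ :=
    C b' * C (c ^ 2) * (8 * u ^ 2) - C d' * C (c ^ 3) * (24 * v) with hD
  set E : MvPolynomial (Fin n) ℝ :=
    -(C a' * C c) * (2 * u ^ 4) + C b' * C (c ^ 2) * (4 * u ^ 2 * v)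
      - C d' * C (c ^ 3) * (6 * v ^ 2) with hE
  have key : ∀ i : Fin n,
      pderiv i (pderiv i
        (u ^ 6 - C a' * u ^ 4 * v * C c + C b' * u ^ 2 * v ^ 2 * C (c ^ 2)
          - C d' * v ^ 3 * C (c ^ 3)))
      = A * (C (y i)) ^ 2 + B * (C (y i) * X i) + D * (X i) ^ 2 + E := by
    intro i
    simp only [map_sub, map_add, pderiv_mul, pderiv_pow, pderiv_C, hu, hv, pderiv_X_self,
      pderiv_ofNat, pderiv_natCast, hA, hB, hD, hE]
    simp only [map_ofNat]
    push_cast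
    norm_num
    ring
  show ∑ i : Fin n, pderiv i (pderiv i _) = 0
  rw [Finset.sum_congr rfl fun i _ => key i]
  have s1 : ∑ i : Fin n, (C (y i) : MvPolynomial (Fin n) ℝ) ^ 2 = C c := by
    rw [hc, map_sum]; simp [map_pow]
  have s2 : ∑ i : Fin n, (C (y i) * X i : MvPolynomial (Fin n) ℝ) = u := rfl
  have s3 : ∑ i : Fin n, (X i : MvPolynomial (Fin n) ℝ) ^ 2 = v := rfl
  have s4 : ∑ _i : Fin n, E = (n : MvPolynomial (Fin n) ℝ) * E := by
    rw [Finset.sum_const, Finset.card_univ, Fintype.card_fin, nsmul_eq_mul]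
  have step : ∑ i : Fin n, (A * C (y i) ^ 2 + B * (C (y i) * X i) + D * X i ^ 2 + E)
      = A * C c + B * u + D * v + (n : MvPolynomial (Fin n) ℝ) * E := by
    simp only [Finset.sum_add_distrib, ← Finset.mul_sum, s1, s2, s3, s4]
  rw [step]
  have h8 : (8 : ℝ) + n ≠ 0 := by positivity
  have h48 : (48 : ℝ) + 14 * n + (n : ℝ) ^ 2 ≠ 0 := by positivity
  have h192 : (192 : ℝ) + 104 * n + 18 * (n : ℝ) ^ 2 + (n : ℝ) ^ 3 ≠ 0 := by positivity
  have e1 : 30 - a' * (16 + 2 * (n : ℝ)) = 0 := by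
    rw [ha]; field_simp; ring
  have e2 : b' * (24 + 4 * (n : ℝ)) - 12 * a' = 0 := by
    rw [ha, hb]; field_simp; ring
  have e3 : 2 * b' - d' * (24 + 6 * (n : ℝ)) = 0 := by
    rw [hb, hd]; field_simp; ring
  have expand : A * C c + B * u + D * v + (n : MvPolynomial (Fin n) ℝ) * E =
      C ((30 - a' * (16 + 2 * (n : ℝ))) * c) * u ^ 4
        + C ((b' * (24 + 4 * (n : ℝ)) - 12 * a') * c ^ 2) * (u ^ 2 * v)
        + C ((2 * b' - d' * (24 + 6 * (n : ℝ))) * c ^ 3) * v ^ 2 := by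
    simp only [hA, hB, hD, hE, map_mul, map_sub, map_add, map_ofNat, map_natCast, map_pow]
    ring
  rw [expand, e1, e2, e3]
  simp
end

section
/- Under the same hypotheses (Φ ⊂ ℝⁿ symmetric under negation, all elements of squared norm 2, y ∈ Φ, |Φ| = nh, #{α : (y,α)=1} = 2h−4, #{α : (y,α)=2} = 1, (y,α) ∈ {0,±1,±2}), one has Σ_{α∈Φ} R₆(α) = 4(30(n²−16) + h(n²−48n+272))/(n²+12n+32), where R₆(x) = (x,y)⁶ − (15/(8+n))(x,y)⁴‖x‖²‖y‖²+ (45/(48+14n+n²))(x,y)²‖x‖⁴‖y‖⁴ − (15/(192+104n+18n²+n³))‖x‖⁶‖y‖⁶. -/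
/-!
Since `‖α‖² = ‖y‖² = 2`, the summand is `G((y, α))` for an even polynomial `G`. The pairing
`(y, α)` only takes the values `0, ±1, ±2`, and `Φ = -Φ` gives the fibres over `-1, -2` the sizes
`2h - 4` and `1` of those over `1, 2`; hence the sum is `nh·G(0) + 2((2h - 4)(G(1) - G(0)) + G(2) - G(0))`,
which simplifies to the stated rational function of `n` and `h`.
-/

/-- The dot product on `Fin n → ℝ`. -/
def dotR {n : ℕ} (x y : Fin n → ℝ) : ℝ := ∑ i, x i * y i

open Finset

lemma dotR_comm {n : ℕ} (x y : Fin n → ℝ) : dotR x y = dotR y x :=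
  sum_congr rfl fun _ _ => mul_comm _ _

lemma dotR_neg {n : ℕ} (x y : Fin n → ℝ) : dotR x (-y) = -dotR x y := by
  simp [dotR]

section RootSum

variable {n : ℕ} {Φ : Finset (Fin n → ℝ)} {y : Fin n → ℝ}

lemma card_filter_dotR_eq_neg (hneg : ∀ α ∈ Φ, -α ∈ Φ) (c : ℝ) :
    #{α ∈ Φ | dotR y α = -c} = #{α ∈ Φ | dotR y α = c} := by
  refine card_nbij' (fun α => -α) (fun α => -α) ?_ ?_ (fun _ _ => neg_neg _)
    (fun _ _ => neg_neg _) <;>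
  · intro α hα
    simp only [coe_filter, Set.mem_ofPred_eq] at hα ⊢
    exact ⟨hneg α hα.1, by simp [dotR_neg, hα.2]⟩

lemma sum_dotR_of_even (hneg : ∀ α ∈ Φ, -α ∈ Φ)
    (hvals : ∀ α ∈ Φ, dotR y α ∈ ({0, 1, -1, 2, -2} : Finset ℝ))
    (g : ℝ → ℝ) (hg0 : g 0 = 0) (hg : ∀ t, g (-t) = g t) :
    ∑ α ∈ Φ, g (dotR y α) =
      2 * (#{α ∈ Φ | dotR y α = 1} * g 1 + #{α ∈ Φ | dotR y α = 2} * g 2) := by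
  rw [← sum_fiberwise_of_maps_to' hvals]
  simp only [sum_const, nsmul_eq_mul]
  rw [sum_insert (by norm_num), sum_insert (by norm_num), sum_insert (by norm_num),
    sum_insert (by norm_num), sum_singleton, card_filter_dotR_eq_neg hneg,
    card_filter_dotR_eq_neg hneg, hg, hg, hg0]
  ring

end RootSum

/-- Sum of the degree-6 harmonic polynomial `R₆` over a simply-laced root system
of rank `n` and Coxeter number `h`, normalized so all roots have squared norm 2. -/
theorem stmt_6 (n h : ℕ) (hh : 2 ≤ h) (Φ : Finset (Fin n → ℝ)) (y : Fin n → ℝ)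
    (hneg : ∀ α ∈ Φ, -α ∈ Φ)
    (hnorm : ∀ α ∈ Φ, dotR α α = 2)
    (hy : y ∈ Φ)
    (hcard : Φ.card = n * h)
    (h1 : (Φ.filter (fun α => dotR y α = 1)).card = 2 * h - 4)
    (h2 : (Φ.filter (fun α => dotR y α = 2)).card = 1)
    (hvals : ∀ α ∈ Φ, dotR y α = 0 ∨ dotR y α = 1 ∨ dotR y α = -1 ∨
      dotR y α = 2 ∨ dotR y α = -2) :
    ∑ α ∈ Φ,
      ((dotR α y) ^ 6
        - 15 / (8 + (n : ℝ)) * (dotR α y) ^ 4 * (dotR α α) * (dotR y y)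
        + 45 / (48 + 14 * (n : ℝ) + (n : ℝ) ^ 2) * (dotR α y) ^ 2
            * (dotR α α) ^ 2 * (dotR y y) ^ 2
        - 15 / (192 + 104 * (n : ℝ) + 18 * (n : ℝ) ^ 2 + (n : ℝ) ^ 3)
            * (dotR α α) ^ 3 * (dotR y y) ^ 3)
      = 4 * (30 * ((n : ℝ) ^ 2 - 16) + (h : ℝ) * ((n : ℝ) ^ 2 - 48 * (n : ℝ) + 272))
          / ((n : ℝ) ^ 2 + 12 * (n : ℝ) + 32) := by
  set G : ℝ → ℝ := fun t => t ^ 6 - 15 / (8 + (n : ℝ)) * t ^ 4 * 2 * 2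
    + 45 / (48 + 14 * (n : ℝ) + (n : ℝ) ^ 2) * t ^ 2 * 2 ^ 2 * 2 ^ 2
    - 15 / (192 + 104 * (n : ℝ) + 18 * (n : ℝ) ^ 2 + (n : ℝ) ^ 3) * 2 ^ 3 * 2 ^ 3 with hG
  calc _ = ∑ α ∈ Φ, (G (dotR y α) - G 0 + G 0) := sum_congr rfl fun α hα => by
        rw [hnorm α hα, hnorm y hy, dotR_comm α y, sub_add_cancel]
    _ = 2 * (((2 * h - 4 : ℕ) : ℝ) * (G 1 - G 0) + (G 2 - G 0)) + n * h * G 0 := by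
        rw [sum_add_distrib, sum_const, nsmul_eq_mul, hcard,
          sum_dotR_of_even hneg (by simpa using hvals) (fun t => G t - G 0) (sub_self _)
            (fun t => by simp only [hG]; ring), h1, h2]
        push_cast
        ring
    _ = _ := by
        rw [Nat.cast_sub (by omega)]
        simp only [hG]
        push_cast
        field_simp
        ring
end
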